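/- arXiv:2111.13705 — 2 statements merged into one kernel-verified Lean document; each statement's English description precedes it below -/
import Mathlib

section
/- Let d ≥ 2, ω = e^{2πi/d}, and let K_i = Σ_{j,k=0}^{d-1} α_{ij} ω^{jk} |k+i⟩⟨k| (indices mod d) for a complex matrix (α_{ij}). Then Σ_{i=0}^{d-1} K_i† K_i = 1_d holds if and only if Σ_{i,j} |α_{ij}|² = 1 and Σ_{i,j} α_{i,j+l} α*_{ij} = 0 for all l = 1, …, d−1 (second index mod d). -/
open Matrix BigOperators

/-- The Kraus operator `K_i = Σ_{j,k} α_{ij} ω^{jk} |k+i⟩⟨k|` (indices mod `d`),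
where `ω = e^{2πi/d}`. -/
noncomputable def krausOp (d : ℕ) [NeZero d] (α : Fin d → Fin d → ℂ) (i : Fin d) :
    Matrix (Fin d) (Fin d) ℂ :=
  Matrix.of fun a b =>
    if a = b + i then
      ∑ j : Fin d,
        α i j * Complex.exp (2 * (Real.pi : ℂ) * Complex.I / d) ^ ((j : ℕ) * (b : ℕ))
    else 0

/-!
`K_i` is the cyclic shift by `i` composed with the diagonal matrix with entries
`f_i(b) = Σ_j α_{ij} ω^{jb}`, so `Σ_i K_i† K_i` is diagonal with entries `Σ_i |f_i(b)|²`.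
Expanding, `|f_i(b)|² = Σ_l c_{il} ω^{lb}` with `c_{il} = Σ_j α_{i,j+l} α*_{ij}` the cyclic
autocorrelation of the row `α_i`. Since the discrete Fourier transform on `ℤ/d` is injective,
`Σ_l (Σ_i c_{il}) ω^{lb} = 1` for all `b` exactly when `Σ_i c_{il}` is `1` at `l = 0` and `0`
elsewhere.
-/

open Finset

section RootsOfUnity

variable {d : ℕ}

lemma pow_val_add_mul {M : Type*} [CommMonoid M] {ω : M} (hω : ω ^ d = 1) (j l : Fin d)
    (b : ℕ) : ω ^ (((j + l : Fin d) : ℕ) * b) = ω ^ ((j : ℕ) * b) * ω ^ ((l : ℕ) * b) := by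
  rw [← pow_add, ← add_mul, pow_eq_pow_mod _ hω, Fin.val_add, Nat.mod_mul_mod,
    ← pow_eq_pow_mod _ hω]

variable [NeZero d] {K : Type*} [Field K] {ω : K}

lemma IsPrimitiveRoot.sum_pow_val_mul (hω : IsPrimitiveRoot ω d) (l : Fin d) :
    ∑ b : Fin d, ω ^ ((l : ℕ) * b) = if l = 0 then (d : K) else 0 := by
  split_ifs with hl
  · simp [hl]
  · have hne : ω ^ (l : ℕ) ≠ 1 :=
      hω.pow_ne_one_of_pos_of_lt (Fin.val_ne_zero_iff.mpr hl) l.isLt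
    simp_rw [pow_mul]
    rw [Fin.sum_univ_eq_sum_range (fun n => (ω ^ (l : ℕ)) ^ n), geom_sum_eq hne, ← pow_mul,
      mul_comm, pow_mul, hω.pow_eq_one, one_pow, sub_self, zero_div]

lemma IsPrimitiveRoot.sum_sum_pow_mul_pow_neg (hω : IsPrimitiveRoot ω d) (c : Fin d → K)
    (l₀ : Fin d) :
    ∑ b : Fin d, (∑ l, c l * ω ^ ((l : ℕ) * b)) * ω ^ (((-l₀ : Fin d) : ℕ) * b) = d * c l₀ := by
  calc ∑ b : Fin d, (∑ l, c l * ω ^ ((l : ℕ) * b)) * ω ^ (((-l₀ : Fin d) : ℕ) * b)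
      = ∑ l, c l * ∑ b : Fin d, ω ^ (((l - l₀ : Fin d) : ℕ) * b) := by
        simp_rw [sub_eq_add_neg, pow_val_add_mul hω.pow_eq_one, sum_mul, mul_sum]
        rw [sum_comm]
        simp only [mul_assoc]
    _ = d * c l₀ := by
        simp_rw [hω.sum_pow_val_mul, sub_eq_zero, mul_ite, mul_zero, sum_ite_eq']
        simp [mul_comm]

lemma IsPrimitiveRoot.eq_of_forall_sum_pow_mul_eq (hω : IsPrimitiveRoot ω d)
    {c c' : Fin d → K}
    (h : ∀ b : Fin d, ∑ l, c l * ω ^ ((l : ℕ) * b) = ∑ l, c' l * ω ^ ((l : ℕ) * b)) :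
    c = c' := by
  have := hω.neZero'
  funext l₀
  have hc := hω.sum_sum_pow_mul_pow_neg c l₀
  simp_rw [h, hω.sum_sum_pow_mul_pow_neg c' l₀] at hc
  exact (mul_left_cancel₀ (NeZero.ne _) hc).symm

lemma IsPrimitiveRoot.forall_sum_pow_mul_eq_one_iff (hω : IsPrimitiveRoot ω d)
    (c : Fin d → K) :
    (∀ b : Fin d, ∑ l, c l * ω ^ ((l : ℕ) * b) = 1) ↔ c 0 = 1 ∧ ∀ l ≠ 0, c l = 0 := by
  constructor
  · intro h
    have hδ := hω.eq_of_forall_sum_pow_mul_eq (c' := fun l => if l = 0 then 1 else 0)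
      fun b => by simpa using h b
    subst hδ
    simp
  · rintro ⟨h0, hl⟩ b
    rw [sum_eq_single 0 (fun l _ hl0 => by simp [hl l hl0]) (by simp)]
    simp [h0]

end RootsOfUnity

section Autocorrelation

variable {d : ℕ}

def autocorrelation (a : Fin d → ℂ) (l : Fin d) : ℂ := ∑ j, a (j + l) * star (a j)

lemma star_sum_mul_sum_eq_sum_autocorrelation [NeZero d] {ω : ℂ} (hω : ω ^ d = 1)
    (a : Fin d → ℂ) (b : ℕ) :
    star (∑ j, a j * ω ^ ((j : ℕ) * b)) * ∑ j, a j * ω ^ ((j : ℕ) * b) =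
      ∑ l, autocorrelation a l * ω ^ ((l : ℕ) * b) := by
  have star_pow_mul_pow : ∀ n : ℕ, star (ω ^ n) * ω ^ n = 1 := fun n => by
    rw [Complex.star_def, Complex.conj_mul', norm_pow,
      Complex.norm_eq_one_of_pow_eq_one hω (NeZero.ne d)]
    simp
  calc star (∑ j, a j * ω ^ ((j : ℕ) * b)) * ∑ j, a j * ω ^ ((j : ℕ) * b)
      = ∑ j, ∑ l, star (a j * ω ^ ((j : ℕ) * b)) *
          (a (j + l) * ω ^ (((j + l : Fin d) : ℕ) * b)) := by
        rw [star_sum, sum_mul_sum]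
        exact sum_congr rfl fun j _ => (Equiv.sum_comp (Equiv.addLeft j) fun j' =>
          star (a j * ω ^ ((j : ℕ) * b)) * (a j' * ω ^ ((j' : ℕ) * b))).symm
    _ = ∑ j, ∑ l, a (j + l) * star (a j) * ω ^ ((l : ℕ) * b) := by
        refine sum_congr rfl fun j _ => sum_congr rfl fun l _ => ?_
        rw [pow_val_add_mul hω, star_mul', ← mul_one (a (j + l) * _ * _),
          ← star_pow_mul_pow ((j : ℕ) * b)]
        ring
    _ = ∑ l, autocorrelation a l * ω ^ ((l : ℕ) * b) := by
        rw [sum_comm]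
        simp_rw [autocorrelation, sum_mul]

end Autocorrelation

noncomputable def krausDiagonal (d : ℕ) (α : Fin d → Fin d → ℂ) (i b : Fin d) : ℂ :=
  ∑ j : Fin d, α i j * Complex.exp (2 * (Real.pi : ℂ) * Complex.I / d) ^ ((j : ℕ) * (b : ℕ))

lemma krausOp_apply (d : ℕ) [NeZero d] (α : Fin d → Fin d → ℂ) (i a b : Fin d) :
    krausOp d α i a b = if a = b + i then krausDiagonal d α i b else 0 :=
  rfl

lemma krausOp_conjTranspose_mul_self (d : ℕ) [NeZero d] (α : Fin d → Fin d → ℂ) (i : Fin d) :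
    (krausOp d α i)ᴴ * krausOp d α i =
      diagonal fun b => star (krausDiagonal d α i b) * krausDiagonal d α i b := by
  ext b c
  rcases eq_or_ne b c with rfl | hbc
  · simp [mul_apply, krausOp_apply, apply_ite star]
  · simp [mul_apply, krausOp_apply, apply_ite star, hbc, hbc.symm]

lemma sum_krausOp_conjTranspose_mul_self (d : ℕ) [NeZero d] (α : Fin d → Fin d → ℂ) :
    ∑ i, (krausOp d α i)ᴴ * krausOp d α i = diagonal fun b : Fin d =>
      ∑ l : Fin d, (∑ i, autocorrelation (α i) l) *
        Complex.exp (2 * (Real.pi : ℂ) * Complex.I / d) ^ ((l : ℕ) * (b : ℕ)) := by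
  have hω := (Complex.isPrimitiveRoot_exp d (NeZero.ne d)).pow_eq_one
  simp_rw [krausOp_conjTranspose_mul_self, krausDiagonal,
    star_sum_mul_sum_eq_sum_autocorrelation hω, ← diagonalAddMonoidHom_apply, ← map_sum,
    Finset.sum_fn, sum_mul]
  exact congrArg _ (funext fun b => sum_comm)

theorem trace_preserving_iff_general (d : ℕ) [NeZero d]
    (α : Fin d → Fin d → ℂ) :
    (∑ i : Fin d, (krausOp d α i)ᴴ * krausOp d α i = 1) ↔
      ((∑ i : Fin d, ∑ j : Fin d, α i j * star (α i j) = 1) ∧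
        ∀ l : Fin d, l ≠ 0 →
          ∑ i : Fin d, ∑ j : Fin d, α i (j + l) * star (α i j) = 0) := by
  have hω := Complex.isPrimitiveRoot_exp d (NeZero.ne d)
  rw [sum_krausOp_conjTranspose_mul_self, ← diagonal_one, diagonal_injective.eq_iff, funext_iff,
    hω.forall_sum_pow_mul_eq_one_iff]
  simp [autocorrelation]

/-- `Σ_i K_i† K_i = 1` iff `Σ_{i,j} |α_{ij}|² = 1` and
`Σ_{i,j} α_{i,j+l} α*_{ij} = 0` for all `l ≠ 0`. -/
theorem trace_preserving_iff (d : ℕ) [NeZero d] (hd : 2 ≤ d)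
    (α : Fin d → Fin d → ℂ) :
    (∑ i : Fin d, (krausOp d α i)ᴴ * krausOp d α i = 1) ↔
      ((∑ i : Fin d, ∑ j : Fin d, α i j * star (α i j) = 1) ∧
        ∀ l : Fin d, l ≠ 0 →
          ∑ i : Fin d, ∑ j : Fin d, α i (j + l) * star (α i j) = 0) :=
  trace_preserving_iff_general d α
end

section
/- Let d ≥ 2, ω = e^{2πi/d}, and let K_i = Σ_{j,k=0}^{d-1} α_{ij} ω^{jk} |k+i⟩⟨k| (indices mod d). Then Σ_{i=0}^{d-1} K_i K_i† = 1_d holds if and only if Σ_{i,j} |α_{ij}|² = 1 and Σ_{i,j} α_{i,j+l} α*_{ij} ω^{-il} = 0 for all l = 1, …, d−1. -/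
open Matrix BigOperators

/-!
`K_i` is the weighted shift `|k⟩ ↦ f_i(k) |k + i⟩` with `f_i(k) = Σ_j α_ij ω^{jk}`, so
`K_i K_i†` is diagonal with entries `|f_i(a - i)|²`. Expanding these squares, the `a`-th
diagonal entry of `Σ_i K_i K_i†` is the Fourier sum `Σ_l ω^{la} S_l` of the coefficients `S_l`
appearing in the statement. Since `x ↦ ω^x` is a primitive additive character of `ℤ/d`, this
Fourier transform is injective, and it is constantly `1` exactly when `S = δ_0`.
-/

open scoped Fin.CommRing

namespace Fin

variable {d : ℕ} [NeZero d] {M : Type*} [CommMonoid M]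

def powAddChar (ζ : M) (hζ : ζ ^ d = 1) : AddChar (Fin d) M where
  toFun x := ζ ^ (x : ℕ)
  map_zero_eq_one' := by simp
  map_add_eq_mul' x y := by rw [Fin.val_add, ← pow_eq_pow_mod _ hζ, pow_add]

@[simp]
lemma powAddChar_apply (ζ : M) (hζ : ζ ^ d = 1) (x : Fin d) :
    powAddChar ζ hζ x = ζ ^ (x : ℕ) := rfl

lemma powAddChar_mul (ζ : M) (hζ : ζ ^ d = 1) (x y : Fin d) :
    powAddChar ζ hζ (x * y) = ζ ^ ((x : ℕ) * y) := by
  rw [powAddChar_apply, Fin.val_mul, ← pow_eq_pow_mod _ hζ]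

lemma isPrimitive_powAddChar {ζ : M} (hζ : IsPrimitiveRoot ζ d) :
    (powAddChar ζ hζ.pow_eq_one).IsPrimitive := fun a ha h => by
  have hone := DFunLike.congr_fun h 1
  simp only [AddChar.mulShift_apply, mul_one, powAddChar_apply, AddChar.one_apply] at hone
  exact hζ.pow_ne_one_of_pos_of_lt (Fin.val_ne_zero_iff.mpr ha) a.isLt hone

end Fin

namespace AddChar

variable {R : Type*} [CommRing R] [Fintype R]

section RCLike

variable {K : Type*} [RCLike K]

lemma mul_star_sum_mul_apply (ψ : AddChar R K) (f : R → K) (c : R) :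
    (∑ j, f j * ψ (j * c)) * star (∑ j, f j * ψ (j * c)) =
      ∑ l, ψ (l * c) * ∑ j, f (j + l) * star (f j) := by
  have hstar : ∀ x, star (ψ x) = ψ (-x) := fun x => (map_neg_eq_conj ψ x).symm
  calc (∑ j, f j * ψ (j * c)) * star (∑ j, f j * ψ (j * c))
      = ∑ k, ∑ j, f j * ψ (j * c) * (star (f k) * ψ (-(k * c))) := by
        rw [star_sum, Finset.sum_mul_sum, Finset.sum_comm]
        simp only [star_mul', hstar]
    _ = ∑ k, ∑ l, ψ (l * c) * (f (k + l) * star (f k)) := by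
        refine Finset.sum_congr rfl fun k _ => ?_
        rw [← Equiv.sum_comp (Equiv.addLeft k)]
        refine Finset.sum_congr rfl fun l _ => ?_
        have : ψ ((k + l) * c) * ψ (-(k * c)) = ψ (l * c) := by
          rw [← map_add_eq_mul]; congr 1; ring
        simp only [Equiv.coe_addLeft]
        linear_combination (f (k + l) * star (f k)) * this
    _ = _ := by
        rw [Finset.sum_comm]
        simp only [Finset.mul_sum]

lemma sum_mul_star_sum_mul_apply_sub (ψ : AddChar R K) (α : R → R → K) (a : R) :
    ∑ i, (∑ j, α i j * ψ (j * (a - i))) * star (∑ j, α i j * ψ (j * (a - i))) =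
      ∑ l, ψ (l * a) * ∑ i, ∑ j, α i (j + l) * star (α i j) * ψ (-(i * l)) := by
  simp_rw [mul_star_sum_mul_apply, Finset.mul_sum]
  rw [Finset.sum_comm]
  refine Finset.sum_congr rfl fun l _ => Finset.sum_congr rfl fun i _ =>
    Finset.sum_congr rfl fun j _ => ?_
  have : ψ (l * (a - i)) = ψ (l * a) * ψ (-(i * l)) := by
    rw [← map_add_eq_mul]; congr 1; ring
  rw [this]; ring

end RCLike

variable [DecidableEq R] {K : Type*} [CommRing K] [IsDomain K] [CharZero K] {ψ : AddChar R K}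

lemma IsPrimitive.sum_apply_neg_mul_mul_sum (hψ : ψ.IsPrimitive) (S : R → K) (m : R) :
    ∑ a, ψ (-(m * a)) * ∑ l, ψ (l * a) * S l = Fintype.card R * S m := by
  calc ∑ a, ψ (-(m * a)) * ∑ l, ψ (l * a) * S l
      = ∑ l, (∑ a, ψ (a * (l - m))) * S l := by
        simp_rw [Finset.mul_sum, Finset.sum_mul]
        rw [Finset.sum_comm]
        refine Finset.sum_congr rfl fun l _ => Finset.sum_congr rfl fun a _ => ?_
        rw [← mul_assoc, ← map_add_eq_mul]; ring_nf
    _ = Fintype.card R * S m := by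
        simp_rw [sum_mulShift _ hψ, sub_eq_zero]
        simp

lemma IsPrimitive.forall_sum_apply_mul_eq_one_iff (hψ : ψ.IsPrimitive) (S : R → K) :
    (∀ a, ∑ l, ψ (l * a) * S l = 1) ↔ S 0 = 1 ∧ ∀ l, l ≠ 0 → S l = 0 := by
  constructor
  · intro h
    have hcard : (Fintype.card R : K) ≠ 0 := Nat.cast_ne_zero.mpr Fintype.card_ne_zero
    have key : ∀ m, (Fintype.card R : K) * S m = (if -m = 0 then Fintype.card R else 0 : ℕ) :=
      fun m => by
        rw [← sum_mulShift _ hψ, ← hψ.sum_apply_neg_mul_mul_sum]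
        exact Finset.sum_congr rfl fun a _ => by rw [h, mul_one, mul_neg, mul_comm]
    refine ⟨?_, fun l hl => ?_⟩
    · simpa [hcard] using key 0
    · simpa [hcard, hl] using key l
  · rintro ⟨h0, h⟩ a
    rw [Finset.sum_eq_single 0 (fun l _ hl => by rw [h l hl, mul_zero]) (by simp)]
    simp [h0]

end AddChar

namespace Matrix

variable {n α : Type*} [Fintype n] [DecidableEq n] [AddGroup n]

def weightedShift [Zero α] (g : n → α) (i : n) : Matrix n n α :=
  of fun a b => if a = b + i then g b else 0

lemma weightedShift_mul_conjTranspose [Semiring α] [StarRing α] (g : n → α) (i : n) :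
    weightedShift g i * (weightedShift g i)ᴴ =
      diagonal fun a => g (a - i) * star (g (a - i)) := by
  ext a b
  simp only [weightedShift, mul_apply, conjTranspose_apply, of_apply, diagonal_apply]
  have hvanish : ∀ j, j ≠ a - i →
      (if a = j + i then g j else 0) * star (if b = j + i then g j else 0) = 0 := fun j hj => by
    rw [if_neg fun h => hj (eq_sub_of_add_eq h.symm), zero_mul]
  rw [Finset.sum_eq_single (a - i) (fun j _ => hvanish j) (by simp)]
  by_cases hab : a = b
  · simp [hab]
  · simp [hab, Ne.symm hab]

end Matrix

theorem unital_iff_general (d : ℕ) [NeZero d] (α : Fin d → Fin d → ℂ) :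
    (∑ i : Fin d, krausOp d α i * (krausOp d α i)ᴴ = 1) ↔
      ((∑ i : Fin d, ∑ j : Fin d, α i j * star (α i j) = 1) ∧
        ∀ l : Fin d, l ≠ 0 →
          ∑ i : Fin d, ∑ j : Fin d, α i (j + l) * star (α i j) *
            Complex.exp (2 * (Real.pi : ℂ) * Complex.I / d) ^
              (-(((i : ℕ) : ℤ) * ((l : ℕ) : ℤ))) = 0) := by
  set ω := Complex.exp (2 * (Real.pi : ℂ) * Complex.I / d)
  have hω : IsPrimitiveRoot ω d := Complex.isPrimitiveRoot_exp d (NeZero.ne d)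
  set ψ := Fin.powAddChar ω hω.pow_eq_one
  have hK : ∀ i, krausOp d α i = weightedShift (fun b => ∑ j, α i j * ψ (j * b)) i := fun i => by
    simp only [ψ, Fin.powAddChar_mul]; rfl
  have hS : ∀ i l : Fin d, ω ^ (-(((i : ℕ) : ℤ) * ((l : ℕ) : ℤ))) = ψ (-(i * l)) := fun i l => by
    rw [AddChar.map_neg_eq_inv, Fin.powAddChar_mul, ← Nat.cast_mul, _root_.zpow_neg, zpow_natCast]
  have hdiag : ∀ v : Fin d → Fin d → ℂ, ∑ i, diagonal (v i) = diagonal (∑ i, v i) :=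
    fun v => (map_sum (diagonalAddMonoidHom (Fin d) ℂ) v _).symm
  calc (∑ i, krausOp d α i * (krausOp d α i)ᴴ = 1)
      ↔ ∀ a, ∑ l, ψ (l * a) * ∑ i, ∑ j, α i (j + l) * star (α i j) * ψ (-(i * l)) = 1 := by
        simp_rw [hK, weightedShift_mul_conjTranspose, hdiag, diagonal_eq_one, funext_iff,
          Finset.sum_apply, Pi.one_apply]
        exact forall_congr' fun a => by rw [AddChar.sum_mul_star_sum_mul_apply_sub ψ α a]
    _ ↔ _ := by
        rw [(Fin.isPrimitive_powAddChar hω).forall_sum_apply_mul_eq_one_iff]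
        simp [hS]

/-- `Σ_i K_i K_i† = 1` iff `Σ_{i,j} |α_{ij}|² = 1` and
`Σ_{i,j} α_{i,j+l} α*_{ij} ω^{-il} = 0` for all `l ≠ 0`. -/
theorem unital_iff (d : ℕ) [NeZero d] (hd : 2 ≤ d) (α : Fin d → Fin d → ℂ) :
    (∑ i : Fin d, krausOp d α i * (krausOp d α i)ᴴ = 1) ↔
      ((∑ i : Fin d, ∑ j : Fin d, α i j * star (α i j) = 1) ∧
        ∀ l : Fin d, l ≠ 0 →
          ∑ i : Fin d, ∑ j : Fin d, α i (j + l) * star (α i j) *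
            Complex.exp (2 * (Real.pi : ℂ) * Complex.I / d) ^
              (-(((i : ℕ) : ℤ) * ((l : ℕ) : ℤ))) = 0) :=
  unital_iff_general d α
end
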